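/- Let L be a finite-dimensional complex filiform Lie algebra with dim L ≥ 3. Then L admits a local automorphism which is not an automorphism, i.e. there exists a linear map Δ : L → L such that for every x ∈ L there is an automorphism Φ_x of L with Δ(x) = Φ_x(x), but Δ itself is not an automorphism of L. -/

import Mathlib

/-!
Write `L^k` for `lowerCentralSeries K L L k` and `n = dim L`. The filiform condition makes
`L/L^1` a plane, `L^{n-2}` a central line and `L^{n-1} = 0`. A generic `p` (a group is not the
union of two proper subgroups) has some `q` with `⁅q, p⁆ ∉ L^2` and some `w ∈ L^{n-3}` with
`z = ⁅w, p⁆ ≠ 0`; take `g` killing `L^2` with `g ⁅q, p⁆ = 1` and `Δ = 1 + g ⊗ z`. As `z` is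
central, `⁅Δ q, Δ p⁆ = ⁅q, p⁆ ≠ Δ ⁅q, p⁆`. At `x ∉ L^1`, `Δ` agrees with a transvection
`1 + η ⊗ z` where `η` kills `L^1`, an automorphism. On `L^1`, `Δ` agrees with
`1 + f ⊗ w + g ⊗ z`, where `f` kills `L^1 + K p` and `f q = 1`: writing `⁅w, b⁆ = ψ b • z`,
this is an automorphism because `g ⁅a, b⁆ = f a * ψ b - f b * ψ a`, both sides being alternating
forms on the plane `L/L^1` that agree at `(q, p)`. When `n = 3` one takes `w = q`, so that
`1 + f w = 1 + g z = 2` is invertible.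
-/

open LieModule Module
open LinearMap (transvection)

section LowerCentralSeries

variable {R L M : Type*} [CommRing R] [LieRing L] [LieAlgebra R L]
  [AddCommGroup M] [Module R M] [LieRingModule L M]

theorem lie_mem_lowerCentralSeries_succ (x : L) {m : M} {k : ℕ}
    (hm : m ∈ lowerCentralSeries R L M k) : ⁅x, m⁆ ∈ lowerCentralSeries R L M (k + 1) := by
  rw [lowerCentralSeries_succ]
  exact LieSubmodule.lie_mem_lie (LieSubmodule.mem_top x) hm

theorem lie_mem_lowerCentralSeries_add {i j : ℕ} {x y : L}
    (hx : x ∈ lowerCentralSeries R L L i) (hy : y ∈ lowerCentralSeries R L L j) :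
    ⁅x, y⁆ ∈ lowerCentralSeries R L L (i + j + 1) := by
  induction i generalizing x y j with
  | zero => simpa using lie_mem_lowerCentralSeries_succ x hy
  | succ i ih =>
    rw [lowerCentralSeries_succ, ← LieSubmodule.mem_toSubmodule,
      LieSubmodule.lieIdeal_oper_eq_linear_span'] at hx
    induction hx using Submodule.span_induction with
    | mem _ h =>
      obtain ⟨a, -, m, hm, rfl⟩ := h
      rw [lie_lie]
      refine sub_mem ?_ ?_
      · simpa only [Nat.add_right_comm] using lie_mem_lowerCentralSeries_succ a (ih hm hy)
      · simpa only [Nat.add_right_comm, Nat.add_assoc] using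
          ih hm (lie_mem_lowerCentralSeries_succ a hy)
    | zero => simp
    | add _ _ _ _ ha hb => rw [add_lie]; exact add_mem ha hb
    | smul t _ _ h => rw [smul_lie]; exact SMulMemClass.smul_mem t h

theorem notMem_lowerCentralSeries_one_sup_span_singleton {p q : L}
    (hqp : ⁅q, p⁆ ∉ lowerCentralSeries R L L 2) :
    q ∉ (lowerCentralSeries R L L 1).toSubmodule ⊔ R ∙ p := by
  intro hq
  obtain ⟨u, hu, _, hs, rfl⟩ := Submodule.mem_sup.mp hq
  obtain ⟨s, rfl⟩ := Submodule.mem_span_singleton.mp hs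
  rw [add_lie, smul_lie, lie_self, smul_zero, add_zero] at hqp
  exact hqp (lie_mem_lowerCentralSeries_add (j := 0) hu (by simp))

end LowerCentralSeries

section Dual

variable {K V : Type*} [Field K] [AddCommGroup V] [Module K V]

theorem Submodule.exists_dual_apply_eq_one_of_notMem {p : Submodule K V} {v : V} (hv : v ∉ p) :
    ∃ f : Dual K V, f v = 1 ∧ ∀ u ∈ p, f u = 0 := by
  obtain ⟨f, hfv, hpf⟩ := Submodule.exists_le_ker_of_notMem hv
  exact ⟨(f v)⁻¹ • f, by simp [hfv], fun u hu => by simp [LinearMap.mem_ker.mp (hpf hu)]⟩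

theorem exists_dual_forall_eq_smul {W : Type*} [AddCommGroup W] [Module K W] {T : V →ₗ[K] W}
    {z : W} (hz : z ≠ 0) (hT : ∀ v, T v ∈ K ∙ z) : ∃ ψ : Dual K V, ∀ v, T v = ψ v • z := by
  obtain ⟨χ, hχ, -⟩ :=
    Submodule.exists_dual_apply_eq_one_of_notMem (p := (⊥ : Submodule K W)) (by simpa using hz)
  refine ⟨χ ∘ₗ T, fun v => ?_⟩
  obtain ⟨t, ht⟩ := Submodule.mem_span_singleton.mp (hT v)
  simp [← ht, hχ]

theorem Submodule.sup_span_singleton_sup_span_singleton_eq_top [FiniteDimensional K V]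
    {N : Submodule K V} (hN : finrank K V ≤ finrank K N + 2) {p q : V} (hp : p ∉ N)
    (hq : q ∉ N ⊔ K ∙ p) : N ⊔ K ∙ p ⊔ K ∙ q = ⊤ := by
  have h₁ := Submodule.finrank_lt_finrank_of_lt
    (left_lt_sup.mpr (by rwa [Submodule.span_singleton_le_iff_mem]) : N < N ⊔ K ∙ p)
  have h₂ := Submodule.finrank_lt_finrank_of_lt
    (left_lt_sup.mpr (by rwa [Submodule.span_singleton_le_iff_mem]) :
      N ⊔ K ∙ p < N ⊔ K ∙ p ⊔ K ∙ q)
  exact Submodule.eq_top_of_finrank_eq (le_antisymm (Submodule.finrank_le _) (by omega))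

end Dual

theorem LinearMap.IsAlt.eq_zero_of_sup_span_eq_top {R V M : Type*} [CommRing R] [AddCommGroup V]
    [Module R V] [AddCommGroup M] [Module R M] {B : V →ₗ[R] V →ₗ[R] M} (hB : B.IsAlt)
    {N : Submodule R V} (hN : ∀ a, ∀ u ∈ N, B a u = 0) {p q : V}
    (hspan : N ⊔ R ∙ p ⊔ R ∙ q = ⊤) (hpq : B p q = 0) (a b : V) : B a b = 0 := by
  have decomp : ∀ x, ∃ u ∈ N, ∃ s t : R, u + s • p + t • q = x := by
    intro x
    obtain ⟨y, hy, _, hq, rfl⟩ := Submodule.mem_sup.mp (hspan ▸ Submodule.mem_top : x ∈ _)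
    obtain ⟨u, hu, _, hp, rfl⟩ := Submodule.mem_sup.mp hy
    obtain ⟨s, rfl⟩ := Submodule.mem_span_singleton.mp hp
    obtain ⟨t, rfl⟩ := Submodule.mem_span_singleton.mp hq
    exact ⟨u, hu, s, t, rfl⟩
  obtain ⟨u, hu, s, t, rfl⟩ := decomp a
  obtain ⟨u', hu', s', t', rfl⟩ := decomp b
  have hN' : ∀ x, B u x = 0 := fun x => hB.eq_iff.mp (hN x u hu)
  simp [hN, hN', hu', hB.self_eq_zero, hpq, hB.eq_iff.mp hpq]

theorem AddSubgroup.exists_notMem_and_notMem {G : Type*} [AddGroup G] {H₁ H₂ : AddSubgroup G}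
    {x₁ x₂ : G} (h₁ : x₁ ∉ H₁) (h₂ : x₂ ∉ H₂) : ∃ x, x ∉ H₁ ∧ x ∉ H₂ := by
  by_cases hx₁ : x₁ ∈ H₂
  · by_cases hx₂ : x₂ ∈ H₁
    · exact ⟨x₁ + x₂, fun h => h₁ ((H₁.add_mem_cancel_right hx₂).mp h),
        fun h => h₂ ((H₂.add_mem_cancel_left hx₁).mp h)⟩
    · exact ⟨x₂, hx₂, h₂⟩
  · exact ⟨x₁, h₁, hx₁⟩

section Automorphism

variable {K L : Type*} [Field K] [LieRing L] [LieAlgebra K L]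

def IsLieAutomorphism (Φ : L →ₗ[K] L) : Prop :=
  Function.Bijective Φ ∧ ∀ a b : L, Φ ⁅a, b⁆ = ⁅Φ a, Φ b⁆

def IsLocalLieAutomorphism (Δ : L →ₗ[K] L) : Prop :=
  ∀ x : L, ∃ Φ : L →ₗ[K] L, IsLieAutomorphism Φ ∧ Δ x = Φ x

theorem bijective_transvection {f : Dual K L} {v : L} (h : 1 + f v ≠ 0) :
    Function.Bijective (transvection f v) :=
  (LinearEquiv.dilatransvection (isUnit_iff_ne_zero.mpr h)).bijective

variable {z : L}

theorem transvection_lie_transvection (hz : ∀ x : L, ⁅x, z⁆ = 0) (g : Dual K L) (a b : L) :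
    ⁅transvection g z a, transvection g z b⁆ = ⁅a, b⁆ := by
  have hz' : ∀ x : L, ⁅z, x⁆ = 0 := fun x => by rw [← lie_skew, hz, neg_zero]
  simp [transvection.apply, hz, hz']

theorem isLieAutomorphism_transvection (hz : ∀ x : L, ⁅x, z⁆ = 0) {g : Dual K L}
    (hg : ∀ a b : L, g ⁅a, b⁆ = 0) (hgz : 1 + g z ≠ 0) : IsLieAutomorphism (transvection g z) :=
  ⟨bijective_transvection hgz, fun a b => by
    rw [transvection_lie_transvection hz, transvection.apply, hg, zero_smul, add_zero]⟩

theorem not_isLieAutomorphism_transvection (hz : ∀ x : L, ⁅x, z⁆ = 0) (hz₀ : z ≠ 0)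
    {g : Dual K L} {a b : L} (hab : g ⁅a, b⁆ ≠ 0) : ¬ IsLieAutomorphism (transvection g z) := by
  rintro ⟨-, hhom⟩
  have := hhom a b
  rw [transvection_lie_transvection hz, transvection.apply, add_eq_left] at this
  exact smul_ne_zero hab hz₀ this

/-- This is `1 + D` with `D = f ⊗ w + g ⊗ z`: by `hg`, `D` is a derivation, and its image is
abelian. -/
theorem isLieAutomorphism_transvection_comp (hz : ∀ x : L, ⁅x, z⁆ = 0) {f g ψ : Dual K L}
    {w : L} (hf : ∀ a b : L, f ⁅a, b⁆ = 0) (hw : ∀ b : L, ⁅w, b⁆ = ψ b • z)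
    (hg : ∀ a b : L, g ⁅a, b⁆ = f a * ψ b - f b * ψ a) (hfz : f z = 0) (hfw : 1 + f w ≠ 0)
    (hgz : 1 + g z ≠ 0) : IsLieAutomorphism (transvection f w ∘ₗ transvection g z) := by
  have hz' : ∀ x : L, ⁅z, x⁆ = 0 := fun x => by rw [← lie_skew, hz, neg_zero]
  have hw' : ∀ a, ⁅a, w⁆ = -(ψ a • z) := fun a => by rw [← lie_skew, hw]
  have happ : ∀ x, (transvection f w ∘ₗ transvection g z) x = x + f x • w + g x • z := by
    intro x
    simp only [LinearMap.comp_apply, map_add, map_smul, transvection.apply, hfz, zero_smul,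
      add_zero, add_assoc]
  refine ⟨(bijective_transvection hfw).comp (bijective_transvection hgz), fun a b => ?_⟩
  simp only [happ, lie_add, add_lie, lie_smul, smul_lie, hz, hz', lie_self, smul_zero, add_zero]
  rw [hw' a, hw b, hf, hg]
  module

theorem exists_isLieAutomorphism_apply_eq_of_notMem (hz : ∀ x : L, ⁅x, z⁆ = 0)
    (hz₁ : z ∈ lowerCentralSeries K L L 1) {x : L} (hx : x ∉ lowerCentralSeries K L L 1) (t : K) :
    ∃ Φ : L →ₗ[K] L, IsLieAutomorphism Φ ∧ Φ x = x + t • z := by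
  obtain ⟨η, hηx, hη⟩ := Submodule.exists_dual_apply_eq_one_of_notMem
    (p := (lowerCentralSeries K L L 1).toSubmodule) hx
  refine ⟨transvection (t • η) z, isLieAutomorphism_transvection hz (fun a b => ?_) ?_, ?_⟩
  · simp [hη _ (lie_mem_lowerCentralSeries_succ a (LieSubmodule.mem_top b))]
  · simp [hη z hz₁]
  · simp [transvection.apply, hηx]

end Automorphism

section Filiform

variable (K L : Type*) [Field K] [LieRing L] [LieAlgebra K L]

def IsFiliform : Prop :=
  ∀ k : ℕ, 1 ≤ k → k ≤ finrank K L - 1 →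
    finrank K (lowerCentralSeries K L L k) = finrank K L - k - 1

variable {K L}

namespace IsFiliform

theorem lowerCentralSeries_eq_bot [FiniteDimensional K L] (hL : IsFiliform K L)
    (hn : 3 ≤ finrank K L) :
    lowerCentralSeries K L L (finrank K L - 1) = ⊥ := by
  have h := hL (finrank K L - 1) (by omega) le_rfl
  have h₀ : finrank K (lowerCentralSeries K L L (finrank K L - 1)) = 0 := by omega
  exact (LieSubmodule.toSubmodule_eq_bot _).mp (Submodule.finrank_eq_zero.mp h₀)

theorem finrank_lowerCentralSeries_eq_one (hL : IsFiliform K L) (hn : 3 ≤ finrank K L) :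
    finrank K (lowerCentralSeries K L L (finrank K L - 2)) = 1 := by
  have h := hL (finrank K L - 2) (by omega) (by omega)
  omega

theorem lie_eq_zero [FiniteDimensional K L] (hL : IsFiliform K L) (hn : 3 ≤ finrank K L) {i j : ℕ}
    (hij : finrank K L - 1 ≤ i + j + 1) {x y : L} (hx : x ∈ lowerCentralSeries K L L i)
    (hy : y ∈ lowerCentralSeries K L L j) : ⁅x, y⁆ = 0 := by
  have h := antitone_lowerCentralSeries K L L hij (lie_mem_lowerCentralSeries_add hx hy)
  rwa [hL.lowerCentralSeries_eq_bot hn, LieSubmodule.mem_bot] at h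

theorem not_lowerCentralSeries_one_le_two [FiniteDimensional K L] (hL : IsFiliform K L)
    (hn : 3 ≤ finrank K L) :
    ¬ lowerCentralSeries K L L 1 ≤ lowerCentralSeries K L L 2 := by
  intro hle
  have h₁ := hL 1 le_rfl (by omega)
  have h₂ := hL 2 (by omega) (by omega)
  have : finrank K (lowerCentralSeries K L L 1) ≤ finrank K (lowerCentralSeries K L L 2) :=
    Submodule.finrank_mono ((LieSubmodule.toSubmodule_le_toSubmodule _ _).mpr hle)
  omega

theorem exists_lie_notMem_and_lie_ne_zero [FiniteDimensional K L] (hL : IsFiliform K L)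
    (hn : 3 ≤ finrank K L) :
    ∃ p q w : L, ⁅q, p⁆ ∉ lowerCentralSeries K L L 2 ∧
      w ∈ lowerCentralSeries K L L (finrank K L - 3) ∧ ⁅w, p⁆ ≠ 0 ∧
      (w ∈ lowerCentralSeries K L L 1 ∨ w = q) := by
  set J := lowerCentralSeries K L L (finrank K L - 3)
  let S : AddSubgroup L :=
    { carrier := {p | ∀ w ∈ J, ⁅w, p⁆ = 0}
      add_mem' := fun ha hb w hw => by simp [ha w hw, hb w hw]
      zero_mem' := by simp
      neg_mem' := fun ha w hw => by simp [ha w hw] }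
  obtain ⟨y, -, m, -, hm⟩ : ∃ x ∈ (⊤ : LieIdeal K L), ∃ m ∈ (⊤ : LieIdeal K L),
      ⁅x, m⁆ ∉ lowerCentralSeries K L L 2 := by
    have h := hL.not_lowerCentralSeries_one_le_two hn
    rw [LieModule.lowerCentralSeries_succ K L L 0, lowerCentralSeries_zero,
      LieSubmodule.lie_le_iff] at h
    push Not at h
    exact h
  obtain ⟨x, -, w, hw, hxw⟩ : ∃ x ∈ (⊤ : LieIdeal K L), ∃ w ∈ J, ⁅x, w⁆ ≠ 0 := by
    have h : lowerCentralSeries K L L (finrank K L - 2) ≠ ⊥ := fun h => by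
      have h₁ := hL.finrank_lowerCentralSeries_eq_one hn
      rw [h, finrank_zero_of_subsingleton] at h₁
      exact zero_ne_one h₁
    rw [show finrank K L - 2 = finrank K L - 3 + 1 by omega, LieModule.lowerCentralSeries_succ,
      Ne, LieSubmodule.lie_eq_bot_iff] at h
    push Not at h
    exact h
  obtain ⟨p, hp₁, hp₂⟩ := AddSubgroup.exists_notMem_and_notMem
    (H₁ := (lowerCentralSeries K L L 2).normalizer.toSubmodule.toAddSubgroup) (H₂ := S)
    (x₁ := m) (x₂ := x) (by simpa [LieSubmodule.mem_normalizer] using ⟨y, hm⟩)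
    (fun h => hxw (by rw [← lie_skew, h w hw, neg_zero]))
  obtain ⟨q, hq⟩ : ∃ q, ⁅q, p⁆ ∉ lowerCentralSeries K L L 2 := by
    simpa [LieSubmodule.mem_normalizer] using hp₁
  obtain ⟨w, hw, hwp⟩ : ∃ w ∈ J, ⁅w, p⁆ ≠ 0 := by simpa [S] using hp₂
  rcases Nat.eq_zero_or_pos (finrank K L - 3) with h | h
  · refine ⟨p, q, q, hq, by simp [J, h], fun h₀ => hq (h₀ ▸ zero_mem _), Or.inr rfl⟩
  · exact ⟨p, q, w, hq, hw, hwp, Or.inl (antitone_lowerCentralSeries K L L h hw)⟩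

theorem sup_span_singleton_sup_span_singleton_eq_top [FiniteDimensional K L]
    (hL : IsFiliform K L) (hn : 3 ≤ finrank K L) {p q : L}
    (hqp : ⁅q, p⁆ ∉ lowerCentralSeries K L L 2) :
    (lowerCentralSeries K L L 1).toSubmodule ⊔ K ∙ p ⊔ K ∙ q = ⊤ := by
  refine Submodule.sup_span_singleton_sup_span_singleton_eq_top ?_
    (fun hp => hqp (lie_mem_lowerCentralSeries_succ q hp))
    (notMem_lowerCentralSeries_one_sup_span_singleton hqp)
  have := hL 1 le_rfl (by omega)
  change _ ≤ finrank K (lowerCentralSeries K L L 1) + 2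
  omega

theorem apply_lie_eq_mul_sub_mul [FiniteDimensional K L] (hL : IsFiliform K L)
    (hn : 3 ≤ finrank K L) {p q w : L} (hqp : ⁅q, p⁆ ∉ lowerCentralSeries K L L 2)
    (hw : w ∈ lowerCentralSeries K L L (finrank K L - 3)) (hwp : ⁅w, p⁆ ≠ 0) {f g ψ : Dual K L}
    (hf : ∀ u ∈ lowerCentralSeries K L L 1, f u = 0) (hfp : f p = 0) (hfq : f q = 1)
    (hg : ∀ u ∈ lowerCentralSeries K L L 2, g u = 0) (hgqp : g ⁅q, p⁆ = 1)
    (hψ : ∀ b : L, ⁅w, b⁆ = ψ b • ⁅w, p⁆) (a b : L) : g ⁅a, b⁆ = f a * ψ b - f b * ψ a := by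
  have hψp : ψ p = 1 := smul_left_injective K hwp ((hψ p).symm.trans (one_smul K _).symm)
  have hψ₁ : ∀ u ∈ lowerCentralSeries K L L 1, ψ u = 0 := fun u hu => by
    have := hψ u
    rwa [hL.lie_eq_zero hn (by omega) hw hu, eq_comm, smul_eq_zero_iff_left hwp] at this
  have hgpq : g ⁅p, q⁆ = -1 := by rw [← lie_skew, map_neg, hgqp]
  have := LinearMap.IsAlt.eq_zero_of_sup_span_eq_top
    (B := (toEnd K L L : L →ₗ[K] Module.End K L).compr₂ g - (f.smulRight ψ - ψ.smulRight f))
    (fun x => by simp [mul_comm]) (fun x u hu => ?_)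
    (hL.sup_span_singleton_sup_span_singleton_eq_top hn hqp) (by simp [hgpq, hψp, hfp, hfq]) a b
  · simp only [LinearMap.sub_apply, LinearMap.compr₂_apply, LinearMap.smulRight_apply,
      LinearMap.smul_apply, smul_eq_mul, sub_eq_zero, mul_comm (ψ a)] at this
    exact this
  · simp [hg _ (lie_mem_lowerCentralSeries_succ x hu), hf u hu, hψ₁ u hu]

theorem exists_isLieAutomorphism_eqOn_transvection [FiniteDimensional K L] [CharZero K]
    (hL : IsFiliform K L) (hn : 3 ≤ finrank K L) {p q w : L}
    (hqp : ⁅q, p⁆ ∉ lowerCentralSeries K L L 2)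
    (hw : w ∈ lowerCentralSeries K L L (finrank K L - 3)) (hwp : ⁅w, p⁆ ≠ 0)
    (hwq : w ∈ lowerCentralSeries K L L 1 ∨ w = q) {g : Dual K L}
    (hg : ∀ u ∈ lowerCentralSeries K L L 2, g u = 0) (hgqp : g ⁅q, p⁆ = 1) :
    ∃ Φ : L →ₗ[K] L, IsLieAutomorphism Φ ∧
      ∀ x ∈ lowerCentralSeries K L L 1, Φ x = transvection g ⁅w, p⁆ x := by
  set z := ⁅w, p⁆
  have hwL : ∀ b : L, ⁅w, b⁆ ∈ lowerCentralSeries K L L (finrank K L - 2) := fun b =>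
    (show finrank K L - 3 + 0 + 1 = finrank K L - 2 by omega) ▸
      lie_mem_lowerCentralSeries_add hw (by simp : b ∈ lowerCentralSeries K L L 0)
  have hz₁ : z ∈ lowerCentralSeries K L L 1 :=
    antitone_lowerCentralSeries K L L (by omega) (hwL p)
  have hcentral : ∀ x : L, ⁅x, z⁆ = 0 := fun x =>
    hL.lie_eq_zero hn (i := 0) (by omega) (by simp) (hwL p)
  obtain ⟨f, hfq, hf⟩ := Submodule.exists_dual_apply_eq_one_of_notMem
    (notMem_lowerCentralSeries_one_sup_span_singleton hqp)
  have hf₁ : ∀ u ∈ lowerCentralSeries K L L 1, f u = 0 := fun u hu =>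
    hf u (Submodule.mem_sup_left hu)
  obtain ⟨ψ, hψ⟩ := exists_dual_forall_eq_smul (T := toEnd K L L w) hwp fun b => by
    rw [← eq_span_singleton_of_mem_of_finrank_eq_one
      (hL.finrank_lowerCentralSeries_eq_one hn) (hwL p) hwp]
    exact hwL b
  have hfp : f p = 0 := hf p (Submodule.mem_sup_right (Submodule.mem_span_singleton_self p))
  obtain ⟨hfw, hgz⟩ : 1 + f w ≠ 0 ∧ 1 + g z ≠ 0 := by
    rcases hwq with hw₁ | rfl
    · rw [hf₁ w hw₁, hg z (lie_mem_lowerCentralSeries_add (j := 0) hw₁ (by simp))]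
      norm_num
    · rw [hfq, hgqp]
      norm_num
  refine ⟨transvection f w ∘ₗ transvection g z,
    isLieAutomorphism_transvection_comp hcentral
      (fun a b => hf₁ _ (lie_mem_lowerCentralSeries_succ a (by simp))) hψ
      (hL.apply_lie_eq_mul_sub_mul hn hqp hw hwp hf₁ hfp hfq hg hgqp hψ) (hf₁ z hz₁) hfw hgz,
    fun x hx => ?_⟩
  simp [transvection.apply, hf₁ x hx, hf₁ z hz₁]

end IsFiliform

end Filiform

theorem filiform_admits_localAut_not_aut_general (L : Type*) [LieRing L] [LieAlgebra ℂ L]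
    [Module.Finite ℂ L] (hdim : 3 ≤ Module.finrank ℂ L)
    (hfil : ∀ k : ℕ, 1 ≤ k → k ≤ Module.finrank ℂ L - 1 →
      Module.finrank ℂ (LieModule.lowerCentralSeries ℂ L L k)
        = Module.finrank ℂ L - k - 1) :
    ∃ Δ : L →ₗ[ℂ] L,
      (∀ x : L, ∃ Φ : L →ₗ[ℂ] L,
        (Function.Bijective Φ ∧ ∀ a b : L, Φ ⁅a, b⁆ = ⁅Φ a, Φ b⁆) ∧ Δ x = Φ x) ∧
      ¬ (Function.Bijective Δ ∧ ∀ a b : L, Δ ⁅a, b⁆ = ⁅Δ a, Δ b⁆) := by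
  have hL : IsFiliform ℂ L := hfil
  obtain ⟨p, q, w, hqp, hw, hwp, hwq⟩ := hL.exists_lie_notMem_and_lie_ne_zero hdim
  obtain ⟨g, hgqp, hg⟩ := Submodule.exists_dual_apply_eq_one_of_notMem
    (p := (lowerCentralSeries ℂ L L 2).toSubmodule) hqp
  obtain ⟨Φ, hΦ, hΦΔ⟩ :=
    hL.exists_isLieAutomorphism_eqOn_transvection hdim hqp hw hwp hwq hg hgqp
  have hz := lie_mem_lowerCentralSeries_add hw (by simp : p ∈ lowerCentralSeries ℂ L L 0)
  have hcentral : ∀ x : L, ⁅x, ⁅w, p⁆⁆ = 0 := fun x =>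
    hL.lie_eq_zero hdim (i := 0) (by omega) (by simp) hz
  have hLocal : IsLocalLieAutomorphism (transvection g ⁅w, p⁆) := by
    intro x
    by_cases hx : x ∈ lowerCentralSeries ℂ L L 1
    · exact ⟨Φ, hΦ, (hΦΔ x hx).symm⟩
    · obtain ⟨Ψ, hΨ, hΨx⟩ := exists_isLieAutomorphism_apply_eq_of_notMem hcentral
        (antitone_lowerCentralSeries ℂ L L (by omega) hz) hx (g x)
      exact ⟨Ψ, hΨ, hΨx.symm⟩
  exact ⟨_, hLocal, not_isLieAutomorphism_transvection hcentral hwp (hgqp ▸ one_ne_zero)⟩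

theorem filiform_admits_localAut_not_aut (L : Type*) [LieRing L] [LieAlgebra ℂ L]
    [Module.Finite ℂ L] (hdim : 3 ≤ Module.finrank ℂ L)
    [LieRing.IsNilpotent L]
    (hfil : ∀ k : ℕ, 1 ≤ k → k ≤ Module.finrank ℂ L - 1 →
      Module.finrank ℂ (LieModule.lowerCentralSeries ℂ L L k)
        = Module.finrank ℂ L - k - 1) :
    ∃ Δ : L →ₗ[ℂ] L,
      (∀ x : L, ∃ Φ : L →ₗ[ℂ] L,
        (Function.Bijective Φ ∧ ∀ a b : L, Φ ⁅a, b⁆ = ⁅Φ a, Φ b⁆) ∧ Δ x = Φ x) ∧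
      ¬ (Function.Bijective Δ ∧ ∀ a b : L, Δ ⁅a, b⁆ = ⁅Δ a, Δ b⁆) :=
  filiform_admits_localAut_not_aut_general L hdim hfil
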